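/- arXiv:math/0605712 — 3 statements merged into one kernel-verified Lean document; each statement's English description precedes it below -/
import Mathlib

section
/- Let R be a ring such that every projective left R-module has injective dimension at most 1 and every injective left R-module has projective dimension at most 1 (R is Gorenstein of Gorenstein dimension at most 1). If every left R-module has finite projective dimension (i.e., R has finite global dimension), then every left R-module has projective dimension at most 1 (i.e., R is hereditary). Equivalently: if such a ring R is not hereditary, then its global dimension is infinite. -/
open CategoryTheory

universe u

/-- The `n`-th Ext group `Ext^n_R(X, Y)` of two `R`-modules, computed in the abelian
category of (left) `R`-modules. -/
noncomputable abbrev ExtGroup (R : Type u) [Ring R] (X Y : ModuleCat.{u} R) (n : ℕ) :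
    ModuleCat ℤ :=
  ((Ext ℤ (ModuleCat.{u} R) n).obj (Opposite.op X)).obj Y

/-- A module `M` has projective dimension at most `n` if `Ext^i_R(M, N) = 0`
for every module `N` and every `i > n`. -/
def ProjDimLE (R : Type u) [Ring R] (n : ℕ) (M : ModuleCat.{u} R) : Prop :=
  ∀ (N : ModuleCat.{u} R) (i : ℕ), n < i → Subsingleton (ExtGroup R M N i)

/-- A module `M` has injective dimension at most `n` if `Ext^i_R(N, M) = 0`
for every module `N` and every `i > n`. -/
def InjDimLE (R : Type u) [Ring R] (n : ℕ) (M : ModuleCat.{u} R) : Prop :=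
  ∀ (N : ModuleCat.{u} R) (i : ℕ), n < i → Subsingleton (ExtGroup R N M i)

/-!
A module of finite projective dimension is reached from projectives by finitely many syzygy
steps `0 → K → P → N → 0`, and the long exact sequence
`Ext^i(-, P) → Ext^i(-, N) → Ext^{i+1}(-, K)` carries injective dimension `≤ 1` from `P` and `K`
to `N`. So under the hypotheses every module has injective dimension `≤ 1`, which says that
`Ext^i(M, N) = 0` for all `i ≥ 2` and all `M`, `N`.
-/

universe w

namespace CategoryTheory

open Limits

variable {C : Type*} [Category* C] [Abelian C]

-- `ExtGroup` uses the `Ext` derived from projective resolutions, whereas Mathlib's dimension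
-- theory is built on `Abelian.Ext`; in positive degrees both vanish exactly when every cocycle
-- on a projective resolution is a coboundary.
namespace ProjectiveResolution

variable {X : C} (Q : ProjectiveResolution X) (Y : C) (n : ℕ)

lemma subsingleton_ext_succ_iff [EnoughProjectives C] {S : Type*} [Ring S] [Linear S C] :
    Subsingleton (((Ext S C (n + 1)).obj (Opposite.op X)).obj Y) ↔
      ∀ f : Q.complex.X (n + 1) ⟶ Y, Q.complex.d (n + 2) (n + 1) ≫ f = 0 →
        ∃ g : Q.complex.X n ⟶ Y, Q.complex.d (n + 1) n ≫ g = f := by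
  rw [← ModuleCat.isZero_iff_subsingleton, (Q.isoExt (R := S) (n + 1) Y).isZero_iff,
    ← HomologicalComplex.exactAt_iff_isZero_homology,
    HomologicalComplex.exactAt_iff' _ n (n + 1) (n + 2) (by simp) (by simp),
    ShortComplex.moduleCat_exact_iff]
  exact Iff.rfl

lemma subsingleton_abelianExt_succ_iff [HasExt.{w} C] :
    Subsingleton (Abelian.Ext X Y (n + 1)) ↔
      ∀ f : Q.complex.X (n + 1) ⟶ Y, Q.complex.d (n + 2) (n + 1) ≫ f = 0 →
        ∃ g : Q.complex.X n ⟶ Y, Q.complex.d (n + 1) n ≫ g = f := by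
  refine ⟨fun _ f hf ↦ (Q.extMk_eq_zero_iff f (n + 2) rfl hf n rfl).1 (Subsingleton.elim _ _),
    fun h ↦ (subsingleton_iff_forall_eq 0).2 fun e ↦ ?_⟩
  obtain ⟨f, hf, rfl⟩ := Q.extMk_surjective e (n + 2) rfl
  exact (Q.extMk_eq_zero_iff f (n + 2) rfl hf n rfl).2 (h f hf)

end ProjectiveResolution

lemma subsingleton_ext_iff_subsingleton_abelianExt [EnoughProjectives C] [HasExt.{w} C]
    {S : Type*} [Ring S] [Linear S C] (X Y : C) {i : ℕ} (hi : i ≠ 0) :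
    Subsingleton (((Ext S C i).obj (Opposite.op X)).obj Y) ↔
      Subsingleton (Abelian.Ext X Y i) := by
  obtain ⟨n, rfl⟩ := Nat.exists_eq_succ_of_ne_zero hi
  rw [(projectiveResolution X).subsingleton_ext_succ_iff,
    (projectiveResolution X).subsingleton_abelianExt_succ_iff]

lemma hasInjectiveDimensionLT_of_hasProjectiveDimensionLT [EnoughProjectives C] {d : ℕ}
    (hproj : ∀ P : C, Projective P → HasInjectiveDimensionLT P d)
    (X : C) (n : ℕ) [HasProjectiveDimensionLT X n] : HasInjectiveDimensionLT X d := by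
  suffices ∀ (n : ℕ) (X : C), HasProjectiveDimensionLT X (n + 1) → HasInjectiveDimensionLT X d from
    this n X (hasProjectiveDimensionLT_of_ge X n _ (by lia))
  intro n
  induction n with
  | zero => exact fun X hX ↦ hproj X (projective_iff_hasProjectiveDimensionLT_one.2 hX)
  | succ n ih =>
    intro X hX
    obtain ⟨p⟩ := EnoughProjectives.presentation X
    have hS : (ShortComplex.mk _ _ (kernel.condition p.f)).ShortExact :=
      { exact := ShortComplex.exact_kernel p.f }
    have hK : HasProjectiveDimensionLT (kernel p.f) (n + 1) :=
      hS.hasProjectiveDimensionLT_X₁ (n + 1) (hasProjectiveDimensionLT_of_ge p.p 1 _ (by lia)) hX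
    have := ih (kernel p.f) hK
    exact hS.hasInjectiveDimensionLT_X₃ d (hproj p.p p.projective)
      (hasInjectiveDimensionLT_of_ge _ d _ (by lia))

end CategoryTheory

section ModuleCat

variable {R : Type u} [Ring R] (n : ℕ) (M : ModuleCat.{u} R)

lemma projDimLE_iff_hasProjectiveDimensionLE :
    ProjDimLE R n M ↔ HasProjectiveDimensionLE M n := by
  let := HasExt.standard (ModuleCat.{u} R)
  rw [HasProjectiveDimensionLE, hasProjectiveDimensionLT_iff]
  refine ⟨fun h i hi N ↦ (subsingleton_iff_forall_eq 0).1 ?_, fun h N i hi ↦ ?_⟩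
  · exact (subsingleton_ext_iff_subsingleton_abelianExt M N (by lia)).1 (h N i (by lia))
  · exact (subsingleton_ext_iff_subsingleton_abelianExt M N (by lia)).2
      ((subsingleton_iff_forall_eq 0).2 (h i (by lia) (Y := N)))

lemma injDimLE_iff_hasInjectiveDimensionLE :
    InjDimLE R n M ↔ HasInjectiveDimensionLE M n := by
  let := HasExt.standard (ModuleCat.{u} R)
  rw [HasInjectiveDimensionLE, hasInjectiveDimensionLT_iff]
  refine ⟨fun h i hi N ↦ (subsingleton_iff_forall_eq 0).1 ?_, fun h N i hi ↦ ?_⟩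
  · exact (subsingleton_ext_iff_subsingleton_abelianExt N M (by lia)).1 (h N i (by lia))
  · exact (subsingleton_ext_iff_subsingleton_abelianExt N M (by lia)).2
      ((subsingleton_iff_forall_eq 0).2 (h i (by lia) (Y := N)))

end ModuleCat

theorem hereditary_of_gorenstein_of_finite_global_dim_general (R : Type u) [Ring R]
    (hproj : ∀ P : ModuleCat.{u} R, Projective P → InjDimLE R 1 P)
    (hglob : ∀ M : ModuleCat.{u} R, ∃ m : ℕ, ProjDimLE R m M) :
    ∀ M : ModuleCat.{u} R, ProjDimLE R 1 M := by
  have hinjDim (N : ModuleCat.{u} R) : InjDimLE R 1 N := by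
    obtain ⟨m, hm⟩ := hglob N
    have hN : HasProjectiveDimensionLE N m := (projDimLE_iff_hasProjectiveDimensionLE m N).1 hm
    exact (injDimLE_iff_hasInjectiveDimensionLE 1 N).2
      (hasInjectiveDimensionLT_of_hasProjectiveDimensionLT
        (fun P hP ↦ (injDimLE_iff_hasInjectiveDimensionLE 1 P).1 (hproj P hP)) N (m + 1))
  exact fun M N i hi ↦ hinjDim N M i hi

/-- Let `R` be Gorenstein of Gorenstein dimension at most 1: every projective module has
injective dimension at most 1 and every injective module has projective dimension at
most 1. If every left `R`-module has finite projective dimension (`R` has finite global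
dimension), then every left `R`-module has projective dimension at most 1
(`R` is hereditary). -/
theorem hereditary_of_gorenstein_of_finite_global_dim (R : Type u) [Ring R]
    (hproj : ∀ P : ModuleCat.{u} R, Projective P → InjDimLE R 1 P)
    (hinj : ∀ I : ModuleCat.{u} R, Injective I → ProjDimLE R 1 I)
    (hglob : ∀ M : ModuleCat.{u} R, ∃ m : ℕ, ProjDimLE R m M) :
    ∀ M : ModuleCat.{u} R, ProjDimLE R 1 M :=
  hereditary_of_gorenstein_of_finite_global_dim_general R hproj hglob
end

section
/- Let R be a ring and M an (R,R)-bimodule, and let R ⋉ M be the trivial square-zero extension. Suppose t ≥ 1 is a natural number such that every product of t elements of the Jacobson radical of R equals zero (i.e., rad(R)^t = 0). Then every product of 2t elements of the Jacobson radical of R ⋉ M equals zero (i.e., rad(R ⋉ M)^{2t} = 0). -/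
/-!
The projection `R ⋉ M → R` is a surjective ring map, so it sends `rad(R ⋉ M)` into `rad(R)`.
In a product of `2t` elements `(rᵢ, mᵢ)` of `rad(R ⋉ M)`, the `R`-component `r₁ ⋯ r₂ₜ` vanishes,
and the `M`-component is the sum of the terms `r₁ ⋯ rᵢ₋₁ mᵢ rᵢ₊₁ ⋯ r₂ₜ`, in each of which one of
the two products of `rⱼ`'s has at least `t` factors.
-/

universe u v

open TrivSqZeroExt

theorem TrivSqZeroExt.fst_mem_jacobson_bot {R : Type*} [Ring R] {M : Type*} [AddCommGroup M]
    [Module R M] [Module Rᵐᵒᵖ M] [SMulCommClass R Rᵐᵒᵖ M] {x : TrivSqZeroExt R M}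
    (hx : x ∈ (⊥ : Ideal (TrivSqZeroExt R M)).jacobson) : x.fst ∈ (⊥ : Ideal R).jacobson := by
  have : RingHomSurjective (fstHom ℕ R M).toRingHom := ⟨fst_surjective⟩
  rw [Ideal.jacobson_bot] at hx ⊢
  exact Ring.le_comap_jacobson (fstHom ℕ R M).toRingHom hx

theorem List.prod_eq_zero_of_le_length {M₀ : Type*} [MonoidWithZero M₀] {S : Set M₀} {t : ℕ}
    (hS : ∀ l : List M₀, l.length = t → (∀ x ∈ l, x ∈ S) → l.prod = 0) {l : List M₀}
    (hl : t ≤ l.length) (hlS : ∀ x ∈ l, x ∈ S) : l.prod = 0 := by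
  rw [← l.take_append_drop t, prod_append,
    hS _ (length_take_of_le hl) fun x hx => hlS x (mem_of_mem_take hx), zero_mul]

theorem TrivSqZeroExt.list_prod_eq_zero {R : Type*} [Semiring R] {M : Type*} [AddCommMonoid M]
    [Module R M] [Module Rᵐᵒᵖ M] [SMulCommClass R Rᵐᵒᵖ M] {S : Set R} {t : ℕ}
    (hS : ∀ l : List R, l.length = t → (∀ x ∈ l, x ∈ S) → l.prod = 0) {l : List (TrivSqZeroExt R M)}
    (hl : 2 * t ≤ l.length) (hlS : ∀ x ∈ l, x.fst ∈ S) : l.prod = 0 := by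
  have hfst : ∀ x ∈ l.map fst, x ∈ S := by simpa using hlS
  have prod_eq_zero {l' : List R} (hsub : l'.Sublist (l.map fst)) (hlen : t ≤ l'.length) :
      l'.prod = 0 :=
    List.prod_eq_zero_of_le_length hS hlen fun x hx => hfst x (hsub.subset hx)
  ext
  · rw [fst_list_prod, fst_zero]
    exact prod_eq_zero (List.Sublist.refl _) (by simp; omega)
  · rw [snd_list_prod, snd_zero]
    refine List.sum_eq_zero fun m hm => ?_
    obtain ⟨⟨x, i⟩, -, rfl⟩ := List.mem_map.mp hm
    rcases le_or_gt t i with hi | hi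
    · rw [prod_eq_zero (List.take_sublist _ _) (by simp; omega), zero_smul, smul_zero]
    · rw [prod_eq_zero (List.drop_sublist _ _) (by simp; omega), MulOpposite.op_zero, zero_smul]

theorem jacobson_trivSqZeroExt_nilpotent_general (R : Type u) [Ring R]
    (M : Type v) [AddCommGroup M] [Module R M] [Module Rᵐᵒᵖ M] [SMulCommClass R Rᵐᵒᵖ M]
    (t : ℕ)
    (hR : ∀ l : List R, l.length = t → (∀ x ∈ l, x ∈ (⊥ : Ideal R).jacobson) → l.prod = 0) :
    ∀ l : List (TrivSqZeroExt R M), l.length = 2 * t →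
      (∀ x ∈ l, x ∈ (⊥ : Ideal (TrivSqZeroExt R M)).jacobson) → l.prod = 0 :=
  fun _ hl hmem => list_prod_eq_zero (S := (⊥ : Ideal R).jacobson) hR hl.ge
    fun x hx => fst_mem_jacobson_bot (hmem x hx)

/-- Let `R ⋉ M` be a trivial square-zero extension and `t ≥ 1` a natural number such that
every product of `t` elements of the Jacobson radical of `R` (the intersection of the
maximal left ideals) is zero, i.e. `rad(R)^t = 0`. Then every product of `2 * t`
elements of the Jacobson radical of `R ⋉ M` is zero, i.e. `rad(R ⋉ M)^(2*t) = 0`. -/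
theorem jacobson_trivSqZeroExt_nilpotent (R : Type u) [Ring R]
    (M : Type v) [AddCommGroup M] [Module R M] [Module Rᵐᵒᵖ M] [SMulCommClass R Rᵐᵒᵖ M]
    (t : ℕ) (ht : 1 ≤ t)
    (hR : ∀ l : List R, l.length = t → (∀ x ∈ l, x ∈ (⊥ : Ideal R).jacobson) → l.prod = 0) :
    ∀ l : List (TrivSqZeroExt R M), l.length = 2 * t →
      (∀ x ∈ l, x ∈ (⊥ : Ideal (TrivSqZeroExt R M)).jacobson) → l.prod = 0 :=
  jacobson_trivSqZeroExt_nilpotent_general R M t hR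
end

section
/- Let A be a left artinian ring and let 𝒰 be a class of finite-length left A-modules that contains the zero module and is closed under isomorphisms, submodules, quotient modules, and extensions. Then there exists an idempotent e ∈ A such that a finite-length left A-module M belongs to 𝒰 if and only if the two-sided ideal AeA annihilates M, i.e., (AeA)•M = 0. (In other words, the Serre subcategories of the category of finite-length A-modules are exactly the subcategories of the form mod A/AeA with e an idempotent of A.) -/
open CategoryTheory

universe u

/-!
Since `𝒰` is closed under submodules, finite products and quotients, the left ideals `L` with
`A ⧸ L ∈ 𝒰` are closed under finite intersections, so by artinianity there is a least one, `L`.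
A finitely generated module lies in `𝒰` exactly when `L` annihilates it: it is then a quotient of a
finite sum of copies of `A ⧸ L`, and conversely each cyclic submodule `A m ≅ A ⧸ ann m` of a
module in `𝒰` is in `𝒰`. Closure under extensions makes `L` idempotent, because `A ⧸ L²` is an
extension of `A ⧸ L` by `L ⧸ L²`, which is killed by `L`. Lifting an idempotent generator of the
image of `L` in the semisimple ring `A ⧸ J` (`J` the nilpotent Jacobson radical) yields an
idempotent `e ∈ L` with `y - y e ∈ J` for `y ∈ L`. On a module `M` killed by `e`, every `y ∈ L`
therefore acts as `y - y e ∈ J`, so that `L M = Lⁿ M ⊆ Jⁿ M = 0`.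
-/

structure IsSerreClass {A : Type u} [Ring A] (𝒰 : ModuleCat.{u} A → Prop) : Prop where
  zero : 𝒰 (ModuleCat.of A PUnit)
  iso : ∀ M N : ModuleCat.{u} A, (M ≅ N) → 𝒰 M → 𝒰 N
  sub : ∀ (M : ModuleCat.{u} A) (p : Submodule A M), 𝒰 M → 𝒰 (ModuleCat.of A p)
  quot : ∀ (M : ModuleCat.{u} A) (p : Submodule A M), 𝒰 M → 𝒰 (ModuleCat.of A (M ⧸ p))
  ext : ∀ (X Y Z : ModuleCat.{u} A) (f : X →ₗ[A] Y) (g : Y →ₗ[A] Z),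
    Function.Injective f → Function.Surjective g → Function.Exact f g → 𝒰 X → 𝒰 Z → 𝒰 Y

def idealsWithQuotientIn {A : Type u} [Ring A] (𝒰 : ModuleCat.{u} A → Prop) : Set (Ideal A) :=
  {L | 𝒰 (ModuleCat.of A (A ⧸ L))}

namespace IsSerreClass

variable {A : Type u} [Ring A] {𝒰 : ModuleCat.{u} A → Prop}
  {M N : Type u} [AddCommGroup M] [Module A M] [AddCommGroup N] [Module A N]

theorem of_linearEquiv (h𝒰 : IsSerreClass 𝒰) (e : M ≃ₗ[A] N) (hM : 𝒰 (ModuleCat.of A M)) :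
    𝒰 (ModuleCat.of A N) :=
  h𝒰.iso _ _ e.toModuleIso hM

theorem of_subsingleton (h𝒰 : IsSerreClass 𝒰) [Subsingleton M] : 𝒰 (ModuleCat.of A M) :=
  h𝒰.of_linearEquiv (.ofSubsingleton _ _) h𝒰.zero

theorem of_injective (h𝒰 : IsSerreClass 𝒰) (f : M →ₗ[A] N) (hf : Function.Injective f)
    (hN : 𝒰 (ModuleCat.of A N)) : 𝒰 (ModuleCat.of A M) :=
  h𝒰.of_linearEquiv (LinearEquiv.ofInjective f hf).symm (h𝒰.sub (.of A N) _ hN)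

theorem of_surjective (h𝒰 : IsSerreClass 𝒰) (f : M →ₗ[A] N) (hf : Function.Surjective f)
    (hM : 𝒰 (ModuleCat.of A M)) : 𝒰 (ModuleCat.of A N) :=
  h𝒰.of_linearEquiv (f.quotKerEquivOfSurjective hf) (h𝒰.quot (.of A M) _ hM)

theorem of_submodule_of_quotient (h𝒰 : IsSerreClass 𝒰) (p : Submodule A M)
    (hp : 𝒰 (ModuleCat.of A p)) (hq : 𝒰 (ModuleCat.of A (M ⧸ p))) : 𝒰 (ModuleCat.of A M) :=
  h𝒰.ext (.of A p) (.of A M) (.of A (M ⧸ p)) p.subtype p.mkQ p.injective_subtype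
    p.mkQ_surjective (LinearMap.exact_subtype_mkQ p) hp hq

theorem prod (h𝒰 : IsSerreClass 𝒰) (hM : 𝒰 (ModuleCat.of A M)) (hN : 𝒰 (ModuleCat.of A N)) :
    𝒰 (ModuleCat.of A (M × N)) :=
  h𝒰.ext (.of A M) (.of A (M × N)) (.of A N) (LinearMap.inl A M N) (LinearMap.snd A M N)
    LinearMap.inl_injective LinearMap.snd_surjective Function.Exact.inl_snd hM hN

theorem sup (h𝒰 : IsSerreClass 𝒰) {p q : Submodule A M} (hp : 𝒰 (ModuleCat.of A p))
    (hq : 𝒰 (ModuleCat.of A q)) : 𝒰 (ModuleCat.of A ↥(p ⊔ q)) := by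
  refine h𝒰.of_surjective ((Submodule.inclusion le_sup_left).coprod
    (Submodule.inclusion le_sup_right)) ?_ (h𝒰.prod hp hq)
  rintro ⟨x, hx⟩
  obtain ⟨y, hy, z, hz, rfl⟩ := Submodule.mem_sup.mp hx
  exact ⟨(⟨y, hy⟩, ⟨z, hz⟩), rfl⟩

theorem quotient_inf (h𝒰 : IsSerreClass 𝒰) {p q : Submodule A M}
    (hp : 𝒰 (ModuleCat.of A (M ⧸ p))) (hq : 𝒰 (ModuleCat.of A (M ⧸ q))) :
    𝒰 (ModuleCat.of A (M ⧸ (p ⊓ q))) := by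
  have hker : p ⊓ q = LinearMap.ker (p.mkQ.prod q.mkQ) := by
    rw [LinearMap.ker_prod, Submodule.ker_mkQ, Submodule.ker_mkQ]
  exact h𝒰.of_injective _ (LinearMap.ker_eq_bot.mp (Submodule.ker_liftQ_eq_bot' _ _ hker))
    (h𝒰.prod hp hq)

theorem exists_isLeast_idealsWithQuotientIn [IsArtinianRing A] (h𝒰 : IsSerreClass 𝒰) :
    ∃ L : Ideal A, IsLeast (idealsWithQuotientIn 𝒰) L := by
  obtain ⟨L, hL, hmin⟩ := wellFounded_lt.has_min (idealsWithQuotientIn 𝒰)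
    ⟨⊤, h𝒰.of_subsingleton⟩
  refine ⟨L, hL, fun L' hL' => ?_⟩
  by_contra hle
  exact hmin _ (h𝒰.quotient_inf hL hL') (inf_lt_left.mpr hle)

variable {L : Ideal A}

theorem le_annihilator (h𝒰 : IsSerreClass 𝒰) (hL : IsLeast (idealsWithQuotientIn 𝒰) L)
    (hM : 𝒰 (ModuleCat.of A M)) : L ≤ Module.annihilator A M := by
  refine fun r hr => Module.mem_annihilator.mpr fun m => ?_
  let f := LinearMap.toSpanSingleton A M m
  have hf : 𝒰 (ModuleCat.of A (A ⧸ LinearMap.ker f)) :=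
    h𝒰.of_injective _ (LinearMap.ker_eq_bot.mp (Submodule.ker_liftQ_eq_bot' _ f rfl)) hM
  exact hL.2 hf hr

theorem of_le_annihilator (h𝒰 : IsSerreClass 𝒰) (hL : IsLeast (idealsWithQuotientIn 𝒰) L)
    [Module.Finite A M] (hM : L ≤ Module.annihilator A M) : 𝒰 (ModuleCat.of A M) := by
  suffices ∀ p : Submodule A M, p.FG → 𝒰 (ModuleCat.of A p) from
    h𝒰.of_linearEquiv Submodule.topEquiv (this ⊤ Module.Finite.fg_top)
  intro p hp
  induction p, hp using Submodule.fg_induction with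
  | singleton x =>
    have hLx : L ≤ LinearMap.ker (LinearMap.toSpanSingleton A M x) :=
      fun r hr => Module.mem_annihilator.mp (hM hr) x
    let f := L.liftQ _ hLx
    have hrange : LinearMap.range f = A ∙ x := by
      rw [Submodule.range_liftQ, LinearMap.range_toSpanSingleton]
    exact h𝒰.of_linearEquiv (.ofEq _ _ hrange) (h𝒰.of_surjective f.rangeRestrict
      f.surjective_rangeRestrict hL.1)
  | sup p q _ _ hp hq => exact h𝒰.sup hp hq

theorem mem_iff_le_annihilator (h𝒰 : IsSerreClass 𝒰) (hL : IsLeast (idealsWithQuotientIn 𝒰) L)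
    [Module.Finite A M] : 𝒰 (ModuleCat.of A M) ↔ L ≤ Module.annihilator A M :=
  ⟨h𝒰.le_annihilator hL, h𝒰.of_le_annihilator hL⟩

theorem isTwoSided (h𝒰 : IsSerreClass 𝒰) (hL : IsLeast (idealsWithQuotientIn 𝒰) L) :
    L.IsTwoSided where
  mul_mem_of_left b hr := by
    have := Module.mem_annihilator.mp (h𝒰.le_annihilator hL hL.1 hr) (Submodule.Quotient.mk b)
    rwa [← Submodule.Quotient.mk_smul, Submodule.Quotient.mk_eq_zero] at this

theorem le_mul_self [IsArtinianRing A] (h𝒰 : IsSerreClass 𝒰)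
    (hL : IsLeast (idealsWithQuotientIn 𝒰) L) : L ≤ L * L := by
  refine hL.2 (h𝒰.of_submodule_of_quotient (Submodule.map (L * L).mkQ L)
    (h𝒰.of_le_annihilator hL ?_) (h𝒰.of_linearEquiv
      (Submodule.quotientQuotientEquivQuotient _ _ Ideal.mul_le_right).symm hL.1))
  refine fun r hr => Module.mem_annihilator.mpr ?_
  rintro ⟨_, s, hs, rfl⟩
  refine Subtype.ext ?_
  change (L * L).mkQ (r • s) = 0
  exact (Submodule.Quotient.mk_eq_zero _).mpr (Ideal.mul_mem_mul hr hs)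

end IsSerreClass

theorem exists_isIdempotentElem_mem_and_sub_mul_mem_jacobson {A : Type*} [Ring A]
    [IsSemiprimaryRing A] (I : Ideal A) [I.IsTwoSided] :
    ∃ e : A, IsIdempotentElem e ∧ e ∈ I ∧ ∀ y ∈ I, y - y * e ∈ Ring.jacobson A := by
  set J := Ring.jacobson A
  let π := Ideal.Quotient.mk J
  obtain ⟨ε, hε, hIε⟩ := IsSemisimpleRing.ideal_eq_span_idempotent (I.map π)
  have hker : ∀ x ∈ RingHom.ker π, IsNilpotent x := by
    obtain ⟨n, hn⟩ := IsSemiprimaryRing.isNilpotent (R := A)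
    refine fun x hx => ⟨n, ?_⟩
    have := Ideal.pow_mem_pow (Ideal.mk_ker (I := J) ▸ hx) n
    rwa [hn, Ideal.zero_eq_bot, Ideal.mem_bot] at this
  obtain ⟨e, he, rfl⟩ := exists_isIdempotentElem_eq_of_ker_isNilpotent π hker ε
    (Ideal.Quotient.mk_surjective ε) hε
  have hright : ∀ y ∈ I, y - y * e ∈ J := by
    intro y hy
    obtain ⟨a, ha⟩ := Ideal.mem_span_singleton'.mp (hIε ▸ Ideal.mem_map_of_mem π hy)
    rw [← Ideal.Quotient.eq_zero_iff_mem, map_sub, map_mul, ← ha, mul_assoc, hε.eq, sub_self]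
  refine ⟨e, he, ?_, hright⟩
  obtain ⟨i, hi, hie⟩ := (Ideal.mem_map_iff_of_surjective π Ideal.Quotient.mk_surjective).mp
    (hIε ▸ Ideal.mem_span_singleton_self (π e))
  have hj : e - i ∈ J := by
    rw [← Ideal.Quotient.eq_zero_iff_mem, map_sub, hie, sub_self]
  obtain ⟨s, hs⟩ := Ideal.exists_mul_sub_mem_of_sub_one_mem_jacobson (I := ⊥) (1 - (e - i))
    (by rw [Ideal.jacobson_bot, sub_sub_cancel_left]; exact neg_mem hj)
  rw [Ideal.mem_bot, sub_eq_zero] at hs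
  have hei : e = s * (i * e) := by
    calc e = s * (1 - (e - i)) * e := by rw [hs, one_mul]
      _ = s * (i * e) := by rw [mul_assoc, sub_mul, sub_mul, one_mul, he.eq, sub_sub_cancel]
  rw [hei]
  exact I.mul_mem_left s (I.mul_mem_right e hi)

theorem le_annihilator_of_forall_smul_eq_zero {A M : Type*} [Ring A] [AddCommGroup M]
    [Module A M]
    {I N : Ideal A} (hI : I ≤ I * I) (hN : IsNilpotent N) {e : A}
    (he : ∀ y ∈ I, y - y * e ∈ N) (hM : ∀ m : M, e • m = 0) :
    I ≤ Module.annihilator A M := by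
  have hsmul : ∀ P : Submodule A M, I • P ≤ N • P := fun P =>
    Submodule.smul_le.mpr fun r hr p hp => by
      have : r • p = (r - r * e) • p := by rw [sub_smul, mul_smul, hM, smul_zero, sub_zero]
      exact this ▸ Submodule.smul_mem_smul (he r hr) hp
  have hpow : ∀ (k : ℕ) (P : Submodule A M), I • P ≤ N ^ k • P := by
    intro k
    induction k with
    | zero => simp [Submodule.pow_zero, Ideal.one_eq_top, Submodule.smul_le_right]
    | succ k ih =>
      intro P
      calc I • P ≤ (I * I) • P := Submodule.smul_mono_left hI
        _ = I • I • P := Submodule.mul_smul _ _ _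
        _ ≤ N ^ k • I • P := ih _
        _ ≤ N ^ k • N • P := smul_mono_right _ (hsmul P)
        _ = N ^ (k + 1) • P := by rw [Submodule.pow_succ, Submodule.mul_smul]
  obtain ⟨n, hn⟩ := hN
  rw [← Submodule.annihilator_top, Submodule.le_annihilator_iff, eq_bot_iff]
  simpa [hn] using hpow n ⊤

theorem serre_class_eq_modules_killed_by_idempotent_general (A : Type u) [Ring A]
    [IsArtinianRing A]
    (𝒰 : ModuleCat.{u} A → Prop)
    (h_zero : 𝒰 (ModuleCat.of A PUnit))
    (h_iso : ∀ M N : ModuleCat.{u} A, (M ≅ N) → 𝒰 M → 𝒰 N)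
    (h_sub : ∀ (M : ModuleCat.{u} A) (p : Submodule A M), 𝒰 M → 𝒰 (ModuleCat.of A p))
    (h_quot : ∀ (M : ModuleCat.{u} A) (p : Submodule A M), 𝒰 M → 𝒰 (ModuleCat.of A (M ⧸ p)))
    (h_ext : ∀ (X Y Z : ModuleCat.{u} A) (f : X →ₗ[A] Y) (g : Y →ₗ[A] Z),
      Function.Injective f → Function.Surjective g → Function.Exact f g →
      𝒰 X → 𝒰 Z → 𝒰 Y) :
    ∃ e : A, IsIdempotentElem e ∧
      ∀ M : ModuleCat.{u} A, IsFiniteLength A M →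
        (𝒰 M ↔ ∀ (a b : A) (m : M), (a * e * b) • m = 0) := by
  have h𝒰 : IsSerreClass 𝒰 := ⟨h_zero, h_iso, h_sub, h_quot, h_ext⟩
  obtain ⟨L, hL⟩ := h𝒰.exists_isLeast_idealsWithQuotientIn
  have := h𝒰.isTwoSided hL
  obtain ⟨e, he, heL, hLe⟩ := exists_isIdempotentElem_mem_and_sub_mul_mem_jacobson L
  refine ⟨e, he, fun M hM => ?_⟩
  have : Module.Finite A M := ((IsArtinianRing.tfae A M).out 0 3).mpr hM
  have hkill : (∀ (a b : A) (m : M), (a * e * b) • m = 0) ↔ ∀ m : M, e • m = 0 :=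
    ⟨fun h m => by simpa using h 1 1 m, fun h a b m => by rw [mul_smul, mul_smul, h, smul_zero]⟩
  rw [hkill]
  exact (h𝒰.mem_iff_le_annihilator hL).trans ⟨fun hLM => Module.mem_annihilator.mp (hLM heL),
    le_annihilator_of_forall_smul_eq_zero (h𝒰.le_mul_self hL) IsSemiprimaryRing.isNilpotent hLe⟩

/-- Let `A` be a left artinian ring and `𝒰` a class of finite-length left `A`-modules
containing the zero module and closed under isomorphisms, submodules, quotient modules
and extensions (a Serre subcategory of the category of finite-length modules). Then
there is an idempotent `e ∈ A` such that a finite-length module `M` belongs to `𝒰` if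
and only if the two-sided ideal `AeA` annihilates `M`, i.e. `(a * e * b) • m = 0` for
all `a b : A` and `m : M`. -/
theorem serre_class_eq_modules_killed_by_idempotent (A : Type u) [Ring A]
    [IsArtinianRing A]
    (𝒰 : ModuleCat.{u} A → Prop)
    (h_fl : ∀ M : ModuleCat.{u} A, 𝒰 M → IsFiniteLength A M)
    (h_zero : 𝒰 (ModuleCat.of A PUnit))
    (h_iso : ∀ M N : ModuleCat.{u} A, (M ≅ N) → 𝒰 M → 𝒰 N)
    (h_sub : ∀ (M : ModuleCat.{u} A) (p : Submodule A M), 𝒰 M → 𝒰 (ModuleCat.of A p))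
    (h_quot : ∀ (M : ModuleCat.{u} A) (p : Submodule A M), 𝒰 M → 𝒰 (ModuleCat.of A (M ⧸ p)))
    (h_ext : ∀ (X Y Z : ModuleCat.{u} A) (f : X →ₗ[A] Y) (g : Y →ₗ[A] Z),
      Function.Injective f → Function.Surjective g → Function.Exact f g →
      𝒰 X → 𝒰 Z → 𝒰 Y) :
    ∃ e : A, IsIdempotentElem e ∧
      ∀ M : ModuleCat.{u} A, IsFiniteLength A M →
        (𝒰 M ↔ ∀ (a b : A) (m : M), (a * e * b) • m = 0) :=
  serre_class_eq_modules_killed_by_idempotent_general A 𝒰 h_zero h_iso h_sub h_quot h_ext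
end
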